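/- Removing a dead-end assumption line from a coherent book does not affect the subject-lists γ_z of the remaining variables: for every variable z introduced by an assumption line that remains, γ_z computed in the reduced book equals γ_z computed in the original book. -/
import Mathlib


/-- Content of an Automath line: `---`, `PN`, or a term (abstractly a natural number). -/
inductive Content where
  | dash : Content
  | pn : Content
  | term : ℕ → Content
deriving DecidableEq

/-- An Automath line: indicator (`none` = ε), identifier, content, category. -/
structure Line where
  indicator : Option ℕ
  identifier : ℕ
  content : Content
  category : ℕ
deriving DecidableEq

abbrev Book := List Line

def Line.isAssum (l : Line) : Bool := l.content == Content.dash
def Line.isPrim (l : Line) : Bool := l.content == Content.pn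
def Line.isDefin (l : Line) : Bool := match l.content with | .term _ => true | _ => false

/-- Coherence: identifiers pairwise distinct, and each non-ε indicator is the
identifier of an earlier assumption line. -/
def Coherent (B : Book) : Prop :=
  (B.map Line.identifier).Nodup ∧
  ∀ m : ℕ, ∀ L : Line, B[m]? = some L → ∀ y : ℕ, L.indicator = some y →
    ∃ l : ℕ, l < m ∧ ∃ L' : Line, B[l]? = some L' ∧ L'.identifier = y ∧ L'.isAssum

/-- Index of the assumption line introducing identifier `y`. -/
def introIdx (B : Book) (y : ℕ) : Option ℕ :=
  B.findIdx? (fun l => l.identifier == y && l.isAssum)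

/-- Fuel-based computation of the subject-list γ of the line at index `i`. -/
def gammaAux (B : Book) : ℕ → ℕ → List ℕ
  | 0, i =>
    match B[i]? with
    | none => []
    | some l => [l.identifier]
  | fuel+1, i =>
    match B[i]? with
    | none => []
    | some l =>
      match l.indicator with
      | none => [l.identifier]
      | some y =>
        match introIdx B y with
        | none => [l.identifier]
        | some j => gammaAux B fuel j ++ [l.identifier]

/-- Subject-list γ_z of variable `z` (introduced by an assumption line). γ_ε = []. -/
def gammaOf (B : Book) (z : ℕ) : List ℕ :=
  match introIdx B z with
  | none => []
  | some i => gammaAux B i i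

/-- Fuel-based computation of the typing-context Γ of the line at index `i`. -/
def ctxAux (B : Book) : ℕ → ℕ → List (ℕ × ℕ)
  | 0, i =>
    match B[i]? with
    | none => []
    | some l => [(l.identifier, l.category)]
  | fuel+1, i =>
    match B[i]? with
    | none => []
    | some l =>
      match l.indicator with
      | none => [(l.identifier, l.category)]
      | some y =>
        match introIdx B y with
        | none => [(l.identifier, l.category)]
        | some j => ctxAux B fuel j ++ [(l.identifier, l.category)]

/-- Typing-context Γ_z of variable `z`. Γ_ε = ∅. -/
def ctxOf (B : Book) (z : ℕ) : List (ℕ × ℕ) :=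
  match introIdx B z with
  | none => []
  | some i => ctxAux B i i

/-- Subject-list of an indicator (γ_ε = [] for the empty indicator). -/
def gammaInd (B : Book) : Option ℕ → List ℕ
  | none => []
  | some y => gammaOf B y

/-- Typing-context of an indicator. -/
def ctxInd (B : Book) : Option ℕ → List (ℕ × ℕ)
  | none => []
  | some y => ctxOf B y

/-- y ≺ z : some line of `B` has indicator `y` (≠ ε) and identifier `z`. -/
def Prec (B : Book) (y z : ℕ) : Prop :=
  ∃ L ∈ B, L.indicator = some y ∧ L.identifier = z

/-- The line at index `i` is a dead-end assumption line. -/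
def DeadEnd (B : Book) (i : ℕ) : Prop :=
  ∃ L : Line, B[i]? = some L ∧ L.isAssum ∧
    ∀ j : ℕ, i < j → ∀ L' : Line, B[j]? = some L' → L'.indicator ≠ some L.identifier

/-- One removal step: delete a single dead-end assumption line. -/
def Step (B B' : Book) : Prop := ∃ i : ℕ, DeadEnd B i ∧ B' = B.eraseIdx i

/-- A clean book: coherent with no dead-end assumption lines. -/
def IsClean (B : Book) : Prop := Coherent B ∧ ∀ i : ℕ, ¬ DeadEnd B i

/-- An entry of the λD-environment Δ_B. -/
structure Entry where
  ctx : List (ℕ × ℕ)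
  const : ℕ
  args : List ℕ
  content : Content
  category : ℕ

def Fresh (B : Book) (x : ℕ) : Prop := ∀ L ∈ B, L.identifier ≠ x

def IndOk (B : Book) : Option ℕ → Prop
  | none => True
  | some z => ∃ L ∈ B, L.identifier = z ∧ L.isAssum

/-- Well-formed (ok) books with their translation Δ_B, relative to abstract
typing judgements `J Δ Γ M A` (Δ; Γ ⊢ M : A) and `S Δ Γ A` (Δ; Γ ⊢ A : s). -/
inductive Ok (J : List Entry → List (ℕ × ℕ) → ℕ → ℕ → Prop)
    (S : List Entry → List (ℕ × ℕ) → ℕ → Prop) : Book → List Entry → Prop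
  | nil : Ok J S [] []
  | assum {B : Book} {Δ : List Entry} {ind : Option ℕ} {x A : ℕ} :
      Ok J S B Δ → Fresh B x → IndOk B ind → S Δ (ctxInd B ind) A →
      Ok J S (B ++ [⟨ind, x, Content.dash, A⟩]) Δ
  | defin {B : Book} {Δ : List Entry} {ind : Option ℕ} {c M A : ℕ} :
      Ok J S B Δ → Fresh B c → IndOk B ind → J Δ (ctxInd B ind) M A →
      Ok J S (B ++ [⟨ind, c, Content.term M, A⟩])
        (Δ ++ [⟨ctxInd B ind, c, gammaInd B ind, Content.term M, A⟩])
  | prim {B : Book} {Δ : List Entry} {ind : Option ℕ} {c A : ℕ} :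
      Ok J S B Δ → Fresh B c → IndOk B ind → S Δ (ctxInd B ind) A →
      Ok J S (B ++ [⟨ind, c, Content.pn, A⟩])
        (Δ ++ [⟨ctxInd B ind, c, gammaInd B ind, Content.pn, A⟩])


private def shf (i m : ℕ) : ℕ := if m < i then m else m - 1

private lemma erase_get (B : Book) (i m : ℕ) (hm : m ≠ i) :
    (B.eraseIdx i)[shf i m]? = B[m]? := by
  rw [List.getElem?_eraseIdx]
  unfold shf
  split_ifs with h1 h2 h2 <;> try omega
  · rfl
  · congr 1; omega

private lemma ident_inj {B : Book} (hnd : (B.map Line.identifier).Nodup)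
    {l m : ℕ} {A C : Line} (hA : B[l]? = some A) (hC : B[m]? = some C)
    (h : A.identifier = C.identifier) : l = m := by
  obtain ⟨hl, hAe⟩ := List.getElem?_eq_some_iff.1 hA
  obtain ⟨hm, hCe⟩ := List.getElem?_eq_some_iff.1 hC
  have hl' : l < (B.map Line.identifier).length := by simpa using hl
  have hm' : m < (B.map Line.identifier).length := by simpa using hm
  have := (hnd.getElem_inj_iff (hi := hl') (hj := hm')).1
  apply this
  simp [hAe, hCe, h]

private lemma intro_of {B : Book} (hnd : (B.map Line.identifier).Nodup)
    {j : ℕ} {Lj : Line} (hj : B[j]? = some Lj) (hy : Lj.identifier = y)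
    (ha : Lj.isAssum) : introIdx B y = some j := by
  obtain ⟨hlt, hje⟩ := List.getElem?_eq_some_iff.1 hj
  rw [introIdx, List.findIdx?_eq_some_iff_getElem]
  refine ⟨hlt, by simp [hje, hy, ha], ?_⟩
  intro k hk
  simp only [Bool.and_eq_true, beq_iff_eq, not_and]
  intro hid hass
  have hkj : k = j := ident_inj hnd (l := k) (m := j)
    (List.getElem?_eq_some_iff.2 ⟨by omega, rfl⟩) hj (by rw [hid, hy])
  omega

private lemma gammaAux_none {B : Book} {m : ℕ} (h : B[m]? = none) (f : ℕ) :
    gammaAux B f m = [] := by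
  cases f <;> simp [gammaAux, h]

private lemma gammaAux_indnone {B : Book} {m : ℕ} {l : Line} (h : B[m]? = some l)
    (hi : l.indicator = none) (f : ℕ) : gammaAux B f m = [l.identifier] := by
  cases f <;> simp [gammaAux, h, hi]

private lemma shf_lt {i l m : ℕ} (h : l < m) (hl : l ≠ i) (hm : m ≠ i) :
    shf i l < shf i m := by
  unfold shf; split_ifs <;> omega

private lemma gammaAux_erase (B : Book) (i : ℕ) (hB : Coherent B)
    (L0 : Line) (hi : B[i]? = some L0)
    (hno : ∀ (m : ℕ) (Lm : Line), B[m]? = some Lm → Lm.indicator ≠ some L0.identifier) :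
    ∀ m, m ≠ i → ∀ f f', m ≤ f → shf i m ≤ f' →
      gammaAux (B.eraseIdx i) f' (shf i m) = gammaAux B f m := by
  have hnd := hB.1
  have hnd' : ((B.eraseIdx i).map Line.identifier).Nodup :=
    hnd.sublist ((B.eraseIdx_sublist i).map Line.identifier)
  intro m
  induction m using Nat.strong_induction_on with
  | _ m IH =>
    intro hmi f f' hf hf'
    have hget := erase_get B i m hmi
    cases hBm : B[m]? with
    | none =>
      rw [gammaAux_none hBm, gammaAux_none (hget.trans hBm)]
    | some l =>
      cases hind : l.indicator with
      | none =>
        rw [gammaAux_indnone hBm hind, gammaAux_indnone (hget.trans hBm) hind]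
      | some y =>
        obtain ⟨l', hl'm, L', hL', hLid, hLass⟩ := hB.2 m l hBm y hind
        have hyx0 : y ≠ L0.identifier := by
          intro h; exact hno m l hBm (by rw [hind, h])
        have hl'i : l' ≠ i := by
          intro h; subst h
          rw [hi] at hL'; injection hL' with h; subst h
          exact hyx0 hLid.symm
        have hintro : introIdx B y = some l' := intro_of hnd hL' hLid hLass
        have hget' := erase_get B i l' hl'i
        have hintro' : introIdx (B.eraseIdx i) y = some (shf i l') :=
          intro_of hnd' (hget'.trans hL') hLid hLass
        have hslt : shf i l' < shf i m := shf_lt hl'm hl'i hmi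
        obtain ⟨g, rfl⟩ : ∃ g, f = g + 1 := ⟨f - 1, by omega⟩
        obtain ⟨g', rfl⟩ : ∃ g', f' = g' + 1 := ⟨f' - 1, by omega⟩
        have h1 : gammaAux B (g + 1) m = gammaAux B g l' ++ [l.identifier] := by
          simp [gammaAux, hBm, hind, hintro]
        have h2 : gammaAux (B.eraseIdx i) (g' + 1) (shf i m)
            = gammaAux (B.eraseIdx i) g' (shf i l') ++ [l.identifier] := by
          simp [gammaAux, hget.trans hBm, hind, hintro']
        rw [h1, h2, IH l' hl'm hl'i g g' (by omega) (by omega)]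

private lemma no_ind {B : Book} (hB : Coherent B) {i : ℕ}
    (L0 : Line) (hi : B[i]? = some L0)
    (hdd : ∀ j, i < j → ∀ L' : Line, B[j]? = some L' → L'.indicator ≠ some L0.identifier) :
    ∀ (m : ℕ) (Lm : Line), B[m]? = some Lm → Lm.indicator ≠ some L0.identifier := by
  intro m Lm hm hcontra
  rcases Nat.lt_or_ge i m with h | h
  · exact hdd m h Lm hm hcontra
  · obtain ⟨l, hlm, L', hL', hid, _⟩ := hB.2 m Lm hm _ hcontra
    have : l = i := ident_inj hB.1 hL' hi hid
    omega

/-- removing a dead-end assumption line does not change the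
subject-lists of the remaining variables. -/
theorem stmt6 (B : Book) (i : ℕ) (hB : Coherent B) (hd : DeadEnd B i)
    (z : ℕ) (L : Line) (hL : L ∈ B.eraseIdx i) (hid : L.identifier = z) (ha : L.isAssum) :
    gammaOf (B.eraseIdx i) z = gammaOf B z := by
  obtain ⟨L0, hi0, ha0, hdd⟩ := hd
  have hno := no_ind hB L0 hi0 hdd
  have hnd := hB.1
  have hnd' : ((B.eraseIdx i).map Line.identifier).Nodup :=
    hnd.sublist ((B.eraseIdx_sublist i).map Line.identifier)
  -- find the index of L in B.eraseIdx i
  obtain ⟨k, hk, hke⟩ := List.getElem_of_mem hL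
  have hk' : (B.eraseIdx i)[k]? = some L := List.getElem?_eq_some_iff.2 ⟨hk, hke⟩
  set m := if k < i then k else k + 1 with hm
  have hmi : m ≠ i := by unfold m; split_ifs <;> omega
  have hshf : shf i m = k := by unfold shf; unfold m; split_ifs <;> omega
  have hBm : B[m]? = some L := by
    rw [← erase_get B i m hmi, hshf]; exact hk'
  have hzx0 : z ≠ L0.identifier := by
    intro h
    have : m = i := ident_inj hnd hBm hi0 (by rw [hid, h])
    exact hmi this
  have hintro : introIdx B z = some m := intro_of hnd hBm hid ha
  have hintro' : introIdx (B.eraseIdx i) z = some k := intro_of hnd' hk' hid ha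
  rw [gammaOf, gammaOf, hintro, hintro', ← hshf]
  exact gammaAux_erase B i hB L0 hi0 hno m hmi m (shf i m) le_rfl le_rfl
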